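/- arXiv:1712.03456 — 3 statements merged into one kernel-verified Lean document; each statement's English description precedes it below -/
import Mathlib

section
/- Suppose that for r = 2 and for all valid parameters, χ(KG^2(n,k)_{2-stab}) = n - 2(k-1) (Schrijver's theorem), and suppose Ziegler's conjecture χ(KG^r(n,k)_{r-stab}) = ⌈(n-r(k-1))/(r-1)⌉ is closed under products of the parameter r. Then for r = 2^t a power of two, k ≥ 1, n ≥ rk, and any partition P of [n] with all parts of size at most r, χ(KG^r(n,k;P)) = ⌈(n - r(k-1))/(r-1)⌉. -/
open Finset

/-- Ceiling division on naturals: `⌈a / b⌉`. -/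
def cld (a b : ℕ) : ℕ := (a + b - 1) / b

/-- `P` is a partition of `Fin N` indexed by `Fin n`. -/
def IsPartition {N n : ℕ} (P : Fin n → Finset (Fin N)) : Prop :=
  (∀ i j, i ≠ j → Disjoint (P i) (P j)) ∧ ∀ x, ∃ i, x ∈ P i

/-- `σ` is transversal to the partition `P`: it meets each part in at most one element. -/
def Transversal {N n : ℕ} (P : Fin n → Finset (Fin N)) (σ : Finset (Fin N)) : Prop :=
  ∀ i, (σ ∩ P i).card ≤ 1

/-- A set `σ ⊆ [n]` is `t`-wide: it is not contained in any interval of length `t`. -/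
def Wide (n t : ℕ) (σ : Finset (Fin n)) : Prop :=
  ∀ a : ℕ, ¬ ∀ x ∈ σ, a ≤ x.val ∧ x.val < a + t

/-- Cyclic distance between two elements of `[n]`. -/
def cycDist (n : ℕ) (x y : Fin n) : ℕ :=
  min (max x.val y.val - min x.val y.val) (n - (max x.val y.val - min x.val y.val))

/-- `σ` is `s`-stable: any two of its elements are at cyclic distance at least `s`. -/
def Stable (n s : ℕ) (σ : Finset (Fin n)) : Prop :=
  ∀ x ∈ σ, ∀ y ∈ σ, x ≠ y → s ≤ cycDist n x y

/-- `b(r) = 2^{α₀}(p₁-1)^{α₁}⋯(p_t-1)^{α_t}` for `r = 2^{α₀}p₁^{α₁}⋯p_t^{α_t}`. -/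
def bfun (r : ℕ) : ℕ := r.factorization.prod fun p a => (if p = 2 then 2 else p - 1) ^ a

/-- Proper coloring of `KG^r(n,k)`: no `r` pairwise disjoint `k`-subsets monochromatic. -/
def ProperKG (r n k : ℕ) {m : ℕ} (c : Finset (Fin n) → Fin m) : Prop :=
  ∀ A : Fin r → Finset (Fin n), (∀ j, (A j).card = k) →
    (∀ j j', j ≠ j' → Disjoint (A j) (A j')) →
    ¬ ∀ j j', c (A j) = c (A j')

noncomputable def chiKG (r n k : ℕ) : ℕ :=
  sInf {m | ∃ c : Finset (Fin n) → Fin m, ProperKG r n k c}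

/-- Proper coloring of `KG^r(N,k;P)` (vertices: transversal `k`-subsets). -/
def ProperP (r N k : ℕ) {ℓ : ℕ} (P : Fin ℓ → Finset (Fin N)) {m : ℕ}
    (c : Finset (Fin N) → Fin m) : Prop :=
  ∀ A : Fin r → Finset (Fin N), (∀ j, (A j).card = k) →
    (∀ j, Transversal P (A j)) →
    (∀ j j', j ≠ j' → Disjoint (A j) (A j')) →
    ¬ ∀ j j', c (A j) = c (A j')

noncomputable def chiP (r N k : ℕ) {ℓ : ℕ} (P : Fin ℓ → Finset (Fin N)) : ℕ :=
  sInf {m | ∃ c : Finset (Fin N) → Fin m, ProperP r N k P c}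

/-- Proper coloring of `KG^r_s(n,k)`: a hyperedge is an `r`-tuple of `k`-subsets such that
each `i ∈ [n]` lies in at most `s i` of them. -/
def ProperS (r n k : ℕ) (s : Fin n → ℕ) {m : ℕ} (c : Finset (Fin n) → Fin m) : Prop :=
  ∀ A : Fin r → Finset (Fin n), (∀ j, (A j).card = k) →
    (∀ i : Fin n, ((univ : Finset (Fin r)).filter fun j => i ∈ A j).card ≤ s i) →
    ¬ ∀ j j', c (A j) = c (A j')

noncomputable def chiS (r n k : ℕ) (s : Fin n → ℕ) : ℕ :=
  sInf {m | ∃ c : Finset (Fin n) → Fin m, ProperS r n k s c}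

/-- Proper coloring of `KG^r_A(n,k)` (vertices: `k`-subsets not contained in `A`). -/
def ProperA (r n k : ℕ) (A : Finset (Fin n)) {m : ℕ} (c : Finset (Fin n) → Fin m) : Prop :=
  ∀ B : Fin r → Finset (Fin n), (∀ j, (B j).card = k) → (∀ j, ¬ B j ⊆ A) →
    (∀ j j', j ≠ j' → Disjoint (B j) (B j')) →
    ¬ ∀ j j', c (B j) = c (B j')

noncomputable def chiA (r n k : ℕ) (A : Finset (Fin n)) : ℕ :=
  sInf {m | ∃ c : Finset (Fin n) → Fin m, ProperA r n k A c}

/-- Proper coloring of the `r`-stable subhypergraph `KG^r(n,k)_{r-stab}`. -/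
def ProperStab (r n k : ℕ) {m : ℕ} (c : Finset (Fin n) → Fin m) : Prop :=
  ∀ A : Fin r → Finset (Fin n), (∀ j, (A j).card = k) → (∀ j, Stable n r (A j)) →
    (∀ j j', j ≠ j' → Disjoint (A j) (A j')) →
    ¬ ∀ j j', c (A j) = c (A j')

noncomputable def chiStab (r n k : ℕ) : ℕ :=
  sInf {m | ∃ c : Finset (Fin n) → Fin m, ProperStab r n k c}

/-- Proper coloring of `KG^r(N,k;P)_{t-wide}` (vertices: `t`-wide transversal `k`-subsets). -/
def ProperPW (r N k t : ℕ) {ℓ : ℕ} (P : Fin ℓ → Finset (Fin N)) {m : ℕ}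
    (c : Finset (Fin N) → Fin m) : Prop :=
  ∀ A : Fin r → Finset (Fin N), (∀ j, (A j).card = k) →
    (∀ j, Transversal P (A j)) → (∀ j, Wide N t (A j)) →
    (∀ j j', j ≠ j' → Disjoint (A j) (A j')) →
    ¬ ∀ j j', c (A j) = c (A j')

noncomputable def chiPW (r N k t : ℕ) {ℓ : ℕ} (P : Fin ℓ → Finset (Fin N)) : ℕ :=
  sInf {m | ∃ c : Finset (Fin N) → Fin m, ProperPW r N k t P c}

/-- Proper coloring of `KG^r_s(n,k)_{t-wide}` (vertices: `t`-wide `k`-subsets). -/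
def ProperSW (r n k t : ℕ) (s : Fin n → ℕ) {m : ℕ} (c : Finset (Fin n) → Fin m) : Prop :=
  ∀ A : Fin r → Finset (Fin n), (∀ j, (A j).card = k) → (∀ j, Wide n t (A j)) →
    (∀ i : Fin n, ((univ : Finset (Fin r)).filter fun j => i ∈ A j).card ≤ s i) →
    ¬ ∀ j j', c (A j) = c (A j')

noncomputable def chiSW (r n k t : ℕ) (s : Fin n → ℕ) : ℕ :=
  sInf {m | ∃ c : Finset (Fin n) → Fin m, ProperSW r n k t s c}

/-- Extension of `s : Fin n → ℕ` to `ℕ` by zero. -/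
def sE {n : ℕ} (s : Fin n → ℕ) (i : ℕ) : ℕ := if h : i < n then s ⟨i, h⟩ else 0

/-- `blockSum s j t = s_j + s_{j+1} + ⋯ + s_{j+t-1}`. -/
def blockSum {n : ℕ} (s : Fin n → ℕ) (j t : ℕ) : ℕ := ∑ i ∈ Finset.Ico j (j + t), sE s i

/-- The partition of `[N]` into consecutive blocks of sizes `s_1, …, s_n`. -/
def blocks {n : ℕ} (s : Fin n → ℕ) (N : ℕ) (j : Fin n) : Finset (Fin N) :=
  univ.filter fun x => blockSum s 0 j.val ≤ x.val ∧ x.val < blockSum s 0 (j.val + 1)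

/-- Ziegler's conjecture for the parameter `r`. -/
def Ziegler (r : ℕ) : Prop :=
  ∀ n k : ℕ, 1 ≤ k → r * k ≤ n → chiStab r n k = cld (n - r * (k - 1)) (r - 1)

/-!
Upper bound: `KG^r(n,k;P)` is a subhypergraph of `KG^r(n,k)`, and colouring a `k`-set by the
block of `r - 1` consecutive numbers containing its least element, the blocks from the
`⌈(n - r(k-1))/(r-1)⌉`-th on merged into one colour, is proper by pigeonhole.

Lower bound: listing `[n]` part by part (lexicographically by part, then by element) gives a
permutation putting each part on at most `r` consecutive positions; its inverse maps every
`r`-stable set to a transversal one, so the `r`-stable Kneser hypergraph embeds in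
`KG^r(n,k;P)`. For `r = 2^t` the stable chromatic number is known from Schrijver's theorem
and the product hypothesis.
-/

lemma le_mul_cld (a : ℕ) {b : ℕ} (hb : 0 < b) : a ≤ b * cld a b := by
  have h₁ := Nat.div_add_mod (a + b - 1) b
  have h₂ := Nat.mod_lt (a + b - 1) hb
  unfold cld
  omega

lemma cld_pos {a b : ℕ} (ha : 0 < a) (hb : 0 < b) : 0 < cld a b :=
  (Nat.one_le_div_iff hb).mpr (by omega)

lemma cld_one (a : ℕ) : cld a 1 = a := by
  simp [cld]

lemma card_le_of_forall_mem_Ico {n a b : ℕ} {S : Finset (Fin n)}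
    (h : ∀ z ∈ S, a ≤ (z : ℕ) ∧ (z : ℕ) < b) : #S ≤ b - a :=
  calc #S = #(S.map Fin.valEmbedding) := (card_map _).symm
    _ ≤ #(Ico a b) := card_le_card fun x hx => by
        obtain ⟨z, hz, rfl⟩ := mem_map.mp hx
        exact mem_Ico.mpr (h z hz)
    _ = b - a := Nat.card_Ico a b

section Greedy

variable {r n k m : ℕ}

/-- Colour `σ` by the block `[i(r-1), (i+1)(r-1))` containing its least element, all blocks
from the `(m-1)`-st on sharing the last colour. -/
def greedyColor (r : ℕ) (hm : 0 < m) (σ : Finset (Fin n)) : Fin m :=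
  ⟨min ((if h : σ.Nonempty then (σ.min' h : ℕ) else 0) / (r - 1)) (m - 1),
    (min_le_right _ _).trans_lt (Nat.sub_lt hm one_pos)⟩

lemma properKG_greedyColor (hr : 2 ≤ r) (hk : 1 ≤ k) (hm : 0 < m)
    (hnm : n - r * (k - 1) ≤ (r - 1) * m) : ProperKG r n k (greedyColor r hm) := by
  intro A hcard hdisj hmono
  have hne : ∀ j, (A j).Nonempty := fun j => card_pos.mp (by rw [hcard]; omega)
  set x : Fin r → Fin n := fun j => (A j).min' (hne j)
  have hxA : ∀ j, x j ∈ A j := fun j => min'_mem _ _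
  let j₀ : Fin r := ⟨0, by omega⟩
  set v := min ((x j₀ : ℕ) / (r - 1)) (m - 1)
  have hv : ∀ j, min ((x j : ℕ) / (r - 1)) (m - 1) = v := fun j => by
    simpa [greedyColor, hne] using congrArg Fin.val (hmono j j₀)
  by_cases hvm : v < m - 1
  · -- the `r` distinct least elements would lie in a block of only `r - 1` numbers
    have hx : Function.Injective x := fun j j' h => by
      by_contra hjj'
      exact disjoint_left.mp (hdisj j j' hjj') (hxA j) (h ▸ hxA j')
    have hblock : ∀ z ∈ univ.image x, v * (r - 1) ≤ (z : ℕ) ∧ (z : ℕ) < (v + 1) * (r - 1) := by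
      simp only [mem_image, mem_univ, true_and, forall_exists_index, forall_apply_eq_imp_iff]
      intro j
      have hq : (x j : ℕ) / (r - 1) = v := by have := hv j; omega
      exact ⟨(Nat.le_div_iff_mul_le (by omega)).mp hq.ge,
        (Nat.div_lt_iff_lt_mul (by omega)).mp (by omega)⟩
    have := card_le_of_forall_mem_Ico hblock
    rw [card_image_of_injective _ hx, card_univ, Fintype.card_fin, add_mul, one_mul,
      Nat.add_sub_cancel_left] at this
    omega
  · -- all `r k` elements of the `A j` would lie in `[(m-1)(r-1), n)`
    have htail : ∀ z ∈ univ.biUnion A, (m - 1) * (r - 1) ≤ (z : ℕ) ∧ (z : ℕ) < n := by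
      simp only [mem_biUnion, mem_univ, true_and, forall_exists_index]
      intro z j hz
      have hq : m - 1 ≤ (x j : ℕ) / (r - 1) := by have := hv j; omega
      exact ⟨((Nat.le_div_iff_mul_le (by omega)).mp hq).trans (min'_le _ _ hz), z.isLt⟩
    have := card_le_of_forall_mem_Ico htail
    rw [card_biUnion fun j _ j' _ h => hdisj j j' h] at this
    simp only [hcard, sum_const, card_univ, Fintype.card_fin, smul_eq_mul] at this
    have hrk : r * (k - 1) + r = r * k := by rw [← Nat.mul_succ]; congr 1; omega
    have hmr : (m - 1) * (r - 1) + (r - 1) = (r - 1) * m := by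
      rw [← Nat.succ_mul, Nat.succ_eq_add_one, Nat.sub_add_cancel hm, mul_comm]
    omega

lemma exists_properKG_cld (hr : 2 ≤ r) (hk : 1 ≤ k) (hn : r * k ≤ n) :
    ∃ c : Finset (Fin n) → Fin (cld (n - r * (k - 1)) (r - 1)), ProperKG r n k c := by
  have hrk : r * (k - 1) < r * k := Nat.mul_lt_mul_of_pos_left (by omega) (by omega)
  exact ⟨_, properKG_greedyColor hr hk (cld_pos (by omega) (by omega))
    (le_mul_cld _ (by omega))⟩

end Greedy

section RankBy

variable {α β : Type*} [Fintype α] [LinearOrder β] (key : α → β)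

def rankBy (z : α) : ℕ := #{y | key y < key z}

lemma rankBy_lt_card (z : α) : rankBy key z < Fintype.card α :=
  card_lt_card (filter_ssubset.mpr ⟨z, mem_univ z, lt_irrefl _⟩)

lemma rankBy_lt_rankBy {a b : α} (h : key a < key b) : rankBy key a < rankBy key b :=
  card_lt_card ⟨fun y hy => by simpa using (mem_filter.mp hy).2.trans h, fun hsub => by
    simpa using hsub (mem_filter.mpr ⟨mem_univ a, h⟩)⟩

lemma rankBy_le_add (a b : α) :
    rankBy key b ≤ rankBy key a + #{z | key a ≤ key z ∧ key z < key b} := by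
  classical
  refine (card_le_card fun y hy => ?_).trans (card_union_le _ _)
  simp only [mem_filter, mem_univ, true_and, mem_union] at hy ⊢
  exact (lt_or_ge (key y) (key a)).imp_right fun h => ⟨h, hy⟩

lemma rankBy_injective (hkey : Function.Injective key) : Function.Injective (rankBy key) :=
  fun a b h => by
    rcases lt_trichotomy (key a) (key b) with hab | hab | hab
    · exact absurd h (rankBy_lt_rankBy key hab).ne
    · exact hkey hab
    · exact absurd h (rankBy_lt_rankBy key hab).ne'

end RankBy

section Partition

variable {n l r : ℕ} {P : Fin l → Finset (Fin n)}

lemma exists_equiv_parts_close (hP : IsPartition P) (hPc : ∀ i, #(P i) ≤ r) :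
    ∃ f : Fin n ≃ Fin n, ∀ i, ∀ a ∈ P i, ∀ b ∈ P i, (f b : ℕ) < f a + r := by
  choose part hpart using hP.2
  have part_eq : ∀ {z i}, z ∈ P i → part z = i := fun {z i} hz => by
    by_contra h
    exact disjoint_left.mp (hP.1 _ _ h) (hpart z) hz
  let key : Fin n → Fin l ×ₗ Fin n := fun z => toLex (part z, z)
  have hkey : Function.Injective key := fun a b h => by
    simpa [key] using congrArg (fun p => (ofLex p).2) h
  let f : Fin n → Fin n := fun z => ⟨rankBy key z, by simpa using rankBy_lt_card key z⟩
  have hf : Function.Injective f := fun a b h =>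
    rankBy_injective key hkey (congrArg Fin.val h)
  refine ⟨Equiv.ofBijective f (Finite.injective_iff_bijective.mp hf), fun i a ha b hb => ?_⟩
  show rankBy key b < rankBy key a + r
  rcases lt_or_ge (key b) (key a) with hba | hab
  · exact (rankBy_lt_rankBy key hba).trans_le (Nat.le_add_right _ _)
  · -- everything between `a` and `b` in the lexicographic order lies in `P i`, except `b`
    have hbetween : ({z | key a ≤ key z ∧ key z < key b} : Finset (Fin n)) ⊂ P i := by
      refine ⟨fun z hz => ?_, fun hsub => by simpa using hsub hb⟩
      simp only [mem_filter, mem_univ, true_and] at hz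
      have h₁ := Prod.Lex.monotone_fst _ _ hz.1
      have h₂ := Prod.Lex.monotone_fst _ _ hz.2.le
      simp only [key, ofLex_toLex, part_eq ha, part_eq hb] at h₁ h₂
      exact le_antisymm h₂ h₁ ▸ hpart z
    exact (rankBy_le_add key a b).trans_lt
      (Nat.add_lt_add_left ((card_lt_card hbetween).trans_le (hPc i)) _)

lemma transversal_image_symm_of_stable {f : Fin n ≃ Fin n}
    (hf : ∀ i, ∀ a ∈ P i, ∀ b ∈ P i, (f b : ℕ) < f a + r) {σ : Finset (Fin n)}
    (hσ : Stable n r σ) : Transversal P (σ.image f.symm) := by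
  intro i
  refine card_le_one.mpr fun a ha b hb => ?_
  have hmem : ∀ {z}, z ∈ σ.image f.symm → f z ∈ σ := fun hz => by
    obtain ⟨y, hy, rfl⟩ := mem_image.mp hz
    simpa using hy
  rw [mem_inter] at ha hb
  by_contra hab
  have hfar := hσ _ (hmem ha.1) _ (hmem hb.1) (f.injective.ne hab)
  have hab' := hf i a ha.2 b hb.2
  have hba' := hf i b hb.2 a ha.2
  unfold cycDist at hfar
  omega

end Partition

lemma ProperKG.properP {r n k l m : ℕ} {c : Finset (Fin n) → Fin m} (hc : ProperKG r n k c)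
    (P : Fin l → Finset (Fin n)) : ProperP r n k P c :=
  fun A hcard _ hdisj => hc A hcard hdisj

lemma ProperP.properStab_comp_image {r n k l m : ℕ} {P : Fin l → Finset (Fin n)}
    {c : Finset (Fin n) → Fin m} (hc : ProperP r n k P c) {e : Fin n ≃ Fin n}
    (he : ∀ σ, Stable n r σ → Transversal P (σ.image e)) :
    ProperStab r n k (fun σ => c (σ.image e)) :=
  fun A hcard hstab hdisj hmono => hc (fun j => (A j).image e)
    (fun j => by rw [card_image_of_injective _ e.injective, hcard])
    (fun j => he _ (hstab j))
    (fun j j' h => (disjoint_image e.injective).mpr (hdisj j j' h)) hmono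

section Chromatic

variable {r n k l m : ℕ} {P : Fin l → Finset (Fin n)}

lemma chiP_le {c : Finset (Fin n) → Fin m} (hc : ProperP r n k P c) : chiP r n k P ≤ m :=
  Nat.sInf_le ⟨c, hc⟩

lemma chiStab_le {c : Finset (Fin n) → Fin m} (hc : ProperStab r n k c) : chiStab r n k ≤ m :=
  Nat.sInf_le ⟨c, hc⟩

lemma exists_properP_chiP {c : Finset (Fin n) → Fin m} (hc : ProperP r n k P c) :
    ∃ c : Finset (Fin n) → Fin (chiP r n k P), ProperP r n k P c :=
  Nat.sInf_mem (s := {m | ∃ c : Finset (Fin n) → Fin m, ProperP r n k P c}) ⟨m, c, hc⟩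

end Chromatic

lemma ziegler_two (hSch : ∀ n k : ℕ, 1 ≤ k → 2 * k ≤ n → chiStab 2 n k = n - 2 * (k - 1)) :
    Ziegler 2 := fun n k hk hn => by
  rw [hSch n k hk hn, Nat.add_one_sub_one, cld_one]

lemma ziegler_two_pow (hSch : ∀ n k : ℕ, 1 ≤ k → 2 * k ≤ n → chiStab 2 n k = n - 2 * (k - 1))
    (hprod : ∀ r1 r2 : ℕ, 2 ≤ r1 → 2 ≤ r2 → Ziegler r1 → Ziegler r2 → Ziegler (r1 * r2))
    {t : ℕ} (ht : 1 ≤ t) : Ziegler (2 ^ t) := by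
  induction t, ht using Nat.le_induction with
  | base => simpa using ziegler_two hSch
  | succ s hs ih =>
    rw [pow_succ]
    exact hprod _ 2 (Nat.le_self_pow (by omega) 2) le_rfl ih (ziegler_two hSch)

/-- assuming Schrijver's theorem and closure of Ziegler's conjecture under
products, for `r = 2^t` a power of two any partition with parts of size at most `r`
satisfies `χ(KG^r(n,k;P)) = ⌈(n - r(k-1))/(r-1)⌉`. -/
theorem stmt6
    (hSch : ∀ n k : ℕ, 1 ≤ k → 2 * k ≤ n → chiStab 2 n k = n - 2 * (k - 1))
    (hprod : ∀ r1 r2 : ℕ, 2 ≤ r1 → 2 ≤ r2 → Ziegler r1 → Ziegler r2 → Ziegler (r1 * r2))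
    (t k n l : ℕ) (ht : 1 ≤ t) (hk : 1 ≤ k) (hn : 2 ^ t * k ≤ n)
    (P : Fin l → Finset (Fin n)) (hP : IsPartition P) (hPc : ∀ i, (P i).card ≤ 2 ^ t) :
    chiP (2 ^ t) n k P = cld (n - 2 ^ t * (k - 1)) (2 ^ t - 1) := by
  obtain ⟨c₀, hc₀⟩ := exists_properKG_cld (Nat.le_self_pow (by omega) 2) hk hn
  obtain ⟨c, hc⟩ := exists_properP_chiP (hc₀.properP P)
  obtain ⟨f, hf⟩ := exists_equiv_parts_close hP hPc
  refine le_antisymm (chiP_le (hc₀.properP P)) ?_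
  rw [← ziegler_two_pow hSch hprod ht n k hk hn]
  exact chiStab_le (hc.properStab_comp_image fun σ hσ => transversal_image_symm_of_stable hf hσ)
end

section
/- Let r ≥ 2, and suppose for every prime p dividing r and all k ≥ 1, n ≥ pk, and partitions P of [n] with parts of size at most p-1 (resp. at most 2 when p = 2) one has χ(KG^p(n,k;P)) ≥ ⌈(n-p(k-1))/(p-1)⌉. Then for all k ≥ 1, n ≥ rk, and partitions P of [n] with parts of size at most b(r), χ(KG^r(n,k;P)) = ⌈(n - r(k-1))/(r-1)⌉. -/
open Finset

/-!
Upper bound: colour a set by the block of length `r - 1` containing its minimum, merging all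
blocks from the last colour on. A monochromatic `r`-tuple of disjoint sets would then have `r`
distinct minima in one block of length `r - 1`, or would fit into the top block, which has fewer
than `rk` elements.

For the lower bound, call `s` good for part size `b` if every `C`-colouring of the subsets of a
set `S` with `s(k-1) + (s-1)C < |S|`, partitioned into parts of size at most `b`, has `s` pairwise
disjoint transversal monochromatic `k`-subsets; for `b = b(s)` this is the lower bound on `χ`.
Goodness is multiplicative: for `s = pu`, split every part into `b(u)` chunks of size at most
`b(p)` and colour each chunk-transversal `k'`-set, `k' = u(k-1) + (u-1)C + 1`, by the colour of a
monochromatic `u`-tuple it contains (it exists by goodness of `u`, since such a set meets every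
part at most `b(u)` times). Goodness of `p` gives `p` disjoint such sets of one colour, and their
`u`-tuples together form the `s`-tuple. Since `b` is multiplicative, the primes dividing `r` give
the lower bound for `r`.
-/

open Function

theorem lt_cld_iff {a b C : ℕ} (hb : 0 < b) : C < cld a b ↔ b * C < a := by
  rw [cld, ← Nat.add_one_le_iff, Nat.le_div_iff_mul_le hb, add_mul, one_mul, mul_comm]
  omega

theorem bfun_one : bfun 1 = 1 := by
  simp [bfun]

theorem bfun_prime {p : ℕ} (hp : p.Prime) : bfun p = if p = 2 then 2 else p - 1 := by
  rw [bfun, hp.factorization, Finsupp.prod_single_index (by simp), pow_one]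

theorem bfun_mul {a b : ℕ} (ha : a ≠ 0) (hb : b ≠ 0) : bfun (a * b) = bfun a * bfun b := by
  rw [bfun, Nat.factorization_mul ha hb]
  exact Finsupp.prod_add_index (by simp) (fun _ _ _ _ => pow_add _ _ _)

def minBlockColouring (n b M : ℕ) (σ : Finset (Fin n)) : Fin (M + 1) :=
  ⟨min M ((if h : σ.Nonempty then (σ.min' h : ℕ) else 0) / b), Nat.lt_succ_of_le (min_le_left _ _)⟩

theorem properKG_minBlockColouring {r n k M : ℕ} (hr : 2 ≤ r) (hk : 0 < k)
    (hn : n < M * (r - 1) + r * k) : ProperKG r n k (minBlockColouring n (r - 1) M) := by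
  intro A hcard hdisj hmono
  have hne : ∀ j, (A j).Nonempty := fun j => card_pos.1 ((hcard j).symm ▸ hk)
  set b := r - 1
  set m : Fin r → ℕ := fun j => ((A j).min' (hne j) : ℕ)
  have hm_inj : Injective m := fun j j' h => by
    by_contra hjj
    exact disjoint_left.1 (hdisj j j' hjj) (min'_mem _ (hne j))
      ((Fin.ext h : (A j).min' _ = (A j').min' _) ▸ min'_mem _ (hne j'))
  set v := min M (m ⟨0, by omega⟩ / b)
  have hcol : ∀ j, min M (m j / b) = v := fun j => by
    simpa [minBlockColouring, hne] using congrArg Fin.val (hmono j ⟨0, by omega⟩)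
  rcases (min_le_left _ _ : v ≤ M).lt_or_eq with hv | hv
  · -- all minima lie in one block of length `b < r`
    have hdiv : ∀ j, m j / b = v := fun j => by
      have := hcol j; rw [min_def] at this; split_ifs at this <;> omega
    have hmod : Injective fun j => (⟨m j % b, Nat.mod_lt _ (by omega)⟩ : Fin b) :=
      fun j j' h => hm_inj <| by
        rw [← Nat.div_add_mod (m j) b, ← Nat.div_add_mod (m j') b, hdiv, hdiv]
        simpa using congrArg Fin.val h
    have := Fintype.card_le_of_injective _ hmod
    simp only [Fintype.card_fin] at this
    omega
  · -- all sets lie in the top block `[M b, n)`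
    have hlow : ∀ j, ∀ x ∈ A j, M * b ≤ x := fun j x hx => by
      have : M ≤ m j / b := by have := hcol j; rw [min_def] at this; split_ifs at this <;> omega
      exact ((Nat.le_div_iff_mul_le (by omega)).1 this).trans (min'_le _ _ hx)
    have hU : (univ.biUnion A).card = r * k := by
      rw [card_biUnion (fun j _ j' _ h => hdisj j j' h)]
      simp [hcard]
    have : (univ.biUnion A).card ≤ (Ico (M * b) n).card :=
      card_le_card_of_injOn Fin.val (fun x hx => by
        obtain ⟨j, -, hj⟩ := mem_biUnion.1 hx
        exact mem_Ico.2 ⟨hlow j x hj, x.isLt⟩) Fin.val_injective.injOn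
    rw [hU, Nat.card_Ico] at this
    have : 0 < r * k := Nat.mul_pos (by omega) hk
    omega

theorem properP_of_properKG {r N k ℓ m : ℕ} (P : Fin ℓ → Finset (Fin N))
    {c : Finset (Fin N) → Fin m} (hc : ProperKG r N k c) : ProperP r N k P c :=
  fun A hcard _ hdisj => hc A hcard hdisj

theorem exists_properP_cld {r n k ℓ : ℕ} (hr : 2 ≤ r) (hk : 0 < k) (hn : r * k ≤ n)
    (P : Fin ℓ → Finset (Fin n)) :
    ∃ c : Finset (Fin n) → Fin (cld (n - r * (k - 1)) (r - 1)), ProperP r n k P c := by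
  have hb : 0 < r - 1 := by omega
  have hrk : r * (k - 1) + r = r * k := by rw [← Nat.mul_add_one, Nat.sub_add_cancel hk]
  obtain ⟨M, hM⟩ : ∃ M, cld (n - r * (k - 1)) (r - 1) = M + 1 :=
    ⟨_, (Nat.succ_pred_eq_of_pos ((lt_cld_iff hb).2 (by omega))).symm⟩
  have hnM : n < M * (r - 1) + r * k := by
    have := (lt_cld_iff (a := n - r * (k - 1)) (C := M + 1) hb).not.1 (by omega)
    rw [mul_add, mul_one, mul_comm] at this
    omega
  rw [hM]
  exact ⟨_, properP_of_properKG P (properKG_minBlockColouring hr hk hnM)⟩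

theorem Finset.exists_fibres_card_le {α : Type*} [DecidableEq α] (T : Finset α) {a b : ℕ}
    (h : T.card ≤ a * b) :
    ∃ f : α → ℕ, (∀ x ∈ T, f x < b) ∧ ∀ j, (T.filter fun x => f x = j).card ≤ a := by
  let g : α → ℕ := fun x => if hx : x ∈ T then T.equivFin ⟨x, hx⟩ else 0
  have hg : ∀ x ∈ T, g x < a * b := fun x hx => by
    simp only [g, dif_pos hx]
    exact (Fin.isLt _).trans_le h
  have hg_inj : Set.InjOn g T := fun x hx y hy hxy => by
    rw [mem_coe] at hx hy
    dsimp only [g] at hxy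
    rw [dif_pos hx, dif_pos hy, Fin.val_inj] at hxy
    exact congrArg Subtype.val (T.equivFin.injective hxy)
  refine ⟨fun x => g x / a, fun x hx => Nat.div_lt_of_lt_mul (hg x hx), fun j => ?_⟩
  calc (T.filter fun x => g x / a = j).card ≤ (Ico (j * a) (j * a + a)).card :=
        card_le_card_of_injOn g (fun x hx => ?_) (hg_inj.mono (filter_subset _ _))
    _ = a := by simp
  obtain ⟨hxT, rfl⟩ := mem_filter.1 hx
  have ha : 0 < a := Nat.pos_of_mul_pos_right ((Nat.zero_le _).trans_lt (hg x hxT))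
  exact mem_Ico.2 ⟨Nat.div_mul_le_self _ _, Nat.lt_div_mul_add ha⟩

section LowerBound

variable {α ι κ : Type*} [DecidableEq α]

structure IsBoundedPartition (S : Finset α) (P : ι → Finset α) (b : ℕ) : Prop where
  disjoint : Pairwise (Disjoint on P)
  cover : ∀ x ∈ S, ∃ i, x ∈ P i
  card_inter_le : ∀ i, (S ∩ P i).card ≤ b

structure IsMonoFamily {β : Type*} (P : ι → Finset α) (S : Finset α) (k : ℕ)
    (c : Finset α → β) (A : κ → Finset α) : Prop where
  subset : ∀ j, A j ⊆ S
  card : ∀ j, (A j).card = k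
  transversal : ∀ j i, (A j ∩ P i).card ≤ 1
  disjoint : Pairwise (Disjoint on A)
  mono : ∀ j j', c (A j) = c (A j')

/-- For `b = b(s)` this is the colouring form of `χ(KG^s(n,k;P)) ≥ ⌈(n - s(k-1))/(s-1)⌉`:
`s(k-1) + (s-1)C < n` says exactly that `C < ⌈(n - s(k-1))/(s-1)⌉`. -/
def MonoBound (α : Type*) [DecidableEq α] (s b : ℕ) : Prop :=
  ∀ (ι : Type) [Fintype ι] (S : Finset α) (P : ι → Finset α) (k C : ℕ) (c : Finset α → Fin C),
    0 < k → IsBoundedPartition S P b → s * (k - 1) + (s - 1) * C < S.card →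
    ∃ A : Fin s → Finset α, IsMonoFamily P S k c A

theorem properP_iff {s n k l m : ℕ} (P : Fin l → Finset (Fin n)) (c : Finset (Fin n) → Fin m) :
    ProperP s n k P c ↔ ∀ A : Fin s → Finset (Fin n), ¬ IsMonoFamily P univ k c A :=
  ⟨fun h A hA => h A hA.card hA.transversal (fun _ _ h => hA.disjoint h) hA.mono,
    fun h A hcard htr hdisj hmono =>
      h A ⟨fun _ => subset_univ _, hcard, htr, fun _ _ => hdisj _ _, hmono⟩⟩

namespace IsMonoFamily

variable {ι' κ' β γ : Type*} {P : ι → Finset α} {S : Finset α} {k : ℕ} {c : Finset α → γ}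
  {A : κ → Finset α}

theorem comp (hA : IsMonoFamily P S k c A) {e : κ' → κ} (he : e.Injective) :
    IsMonoFamily P S k c (A ∘ e) where
  subset j := hA.subset (e j)
  card j := hA.card (e j)
  transversal j := hA.transversal (e j)
  disjoint := hA.disjoint.comp_of_injective he
  mono j j' := hA.mono (e j) (e j')

theorem map [DecidableEq β] (e : β ↪ α) {P' : ι' → Finset β} {T : Finset β} {A : κ → Finset β}
    (hP : ∀ i, ∃ i', ∀ t, e t ∈ P i → t ∈ P' i')
    (hA : IsMonoFamily P' T k (fun τ => c (τ.map e)) A) :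
    IsMonoFamily P (T.map e) k c fun j => (A j).map e where
  subset j := map_subset_map.2 (hA.subset j)
  card j := (card_map e).trans (hA.card j)
  transversal j i := by
    obtain ⟨i', hi'⟩ := hP i
    calc ((A j).map e ∩ P i).card ≤ ((A j ∩ P' i').map e).card := card_le_card fun x hx => by
          obtain ⟨hxA, hxP⟩ := mem_inter.1 hx
          obtain ⟨t, ht, rfl⟩ := mem_map.1 hxA
          exact mem_map_of_mem e (mem_inter.2 ⟨ht, hi' t hxP⟩)
      _ ≤ 1 := (card_map e).trans_le (hA.transversal j i')
  disjoint j j' h := (disjoint_map e).2 (hA.disjoint h)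
  mono := hA.mono

theorem prod {Q : ι' → Finset α} {k' : ℕ} {c' : Finset α → γ} {T : κ → Finset α}
    (hT : IsMonoFamily Q S k' c' T) {B : κ → κ' → Finset α}
    (hB : ∀ j, IsMonoFamily P (T j) k c (B j)) (hc : ∀ j i, c (B j i) = c' (T j)) :
    IsMonoFamily P S k c fun x : κ × κ' => B x.1 x.2 where
  subset x := ((hB x.1).subset x.2).trans (hT.subset x.1)
  card x := (hB x.1).card x.2
  transversal x := (hB x.1).transversal x.2
  disjoint := by
    rintro ⟨j, i⟩ ⟨j', i'⟩ hne
    by_cases hj : j = j'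
    · subst hj
      exact (hB j).disjoint fun hi => hne (Prod.ext rfl hi)
    · exact (hT.disjoint hj).mono ((hB j).subset i) ((hB j').subset i')
  mono x y := by rw [hc, hc, hT.mono]

end IsMonoFamily

theorem IsBoundedPartition.exists_refinement {S : Finset α} {P : ι → Finset α} {a b : ℕ}
    (hP : IsBoundedPartition S P (a * b)) :
    ∃ Q : ι × Fin b → Finset α, IsBoundedPartition S Q a ∧ ∀ q, Q q ⊆ P q.1 := by
  choose f hf_lt hf_card using fun i => (S ∩ P i).exists_fibres_card_le (hP.card_inter_le i)
  refine ⟨fun q => (S ∩ P q.1).filter fun x => f q.1 x = q.2, ⟨?_, fun x hx => ?_, fun q => ?_⟩,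
    fun q => (filter_subset _ _).trans inter_subset_right⟩
  · rintro ⟨i, j⟩ ⟨i', j'⟩ hne
    by_cases hi : i = i'
    · subst hi
      have hj : j ≠ j' := fun h => hne (h ▸ rfl)
      exact disjoint_filter.2 fun x _ hx hx' => hj (Fin.ext (hx.symm.trans hx'))
    · exact (hP.disjoint hi).mono ((filter_subset _ _).trans inter_subset_right)
        ((filter_subset _ _).trans inter_subset_right)
  · obtain ⟨i, hi⟩ := hP.cover x hx
    exact ⟨(i, ⟨f i x, hf_lt i x (mem_inter.2 ⟨hx, hi⟩)⟩), mem_filter.2 ⟨mem_inter.2 ⟨hx, hi⟩, rfl⟩⟩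
  · exact (card_le_card inter_subset_right).trans (hf_card q.1 q.2)

theorem card_inter_le_of_refines {S S' : Finset α} {P : ι → Finset α} {b : ℕ}
    {Q : ι × Fin b → Finset α} (hP : Pairwise (Disjoint on P)) (hQP : ∀ q, Q q ⊆ P q.1)
    (hQ : ∀ x ∈ S, ∃ q, x ∈ Q q) (hS' : S' ⊆ S) (htr : ∀ q, (S' ∩ Q q).card ≤ 1) (i : ι) :
    (S' ∩ P i).card ≤ b :=
  calc (S' ∩ P i).card ≤ (univ.biUnion fun j => S' ∩ Q (i, j)).card := card_le_card fun x hx => by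
        obtain ⟨hxS', hxP⟩ := mem_inter.1 hx
        obtain ⟨⟨i', j⟩, hq⟩ := hQ x (hS' hxS')
        obtain rfl : i' = i := by_contra fun h => disjoint_left.1 (hP h) (hQP _ hq) hxP
        exact mem_biUnion.2 ⟨j, mem_univ _, mem_inter.2 ⟨hxS', hq⟩⟩
    _ ≤ ∑ j, (S' ∩ Q (i, j)).card := card_biUnion_le
    _ ≤ ∑ _j : Fin b, 1 := sum_le_sum fun j _ => htr (i, j)
    _ = b := by simp

theorem mul_sub_one_add_sub_one {p u : ℕ} (hu : 0 < u) (x C : ℕ) :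
    p * (u * x + (u - 1) * C) + (p - 1) * C = p * u * x + (p * u - 1) * C := by
  obtain ⟨u, rfl⟩ : ∃ u', u = u' + 1 := ⟨u - 1, by omega⟩
  rcases p with _ | p
  · simp
  · have : (p + 1) * (u + 1) - 1 = p * u + p + u := by
      rw [Nat.sub_eq_iff_eq_add (Nat.mul_pos (by omega) (by omega))]
      ring
    rw [this, Nat.add_sub_cancel, Nat.add_sub_cancel]
    ring

namespace MonoBound

theorem zero (b : ℕ) : MonoBound α 0 b :=
  fun _ _ _ _ _ _ _ _ _ _ => ⟨Fin.elim0, ⟨fun j => j.elim0, fun j => j.elim0,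
    fun j => j.elim0, fun j => j.elim0, fun j => j.elim0⟩⟩

theorem one : MonoBound α 1 1 := by
  intro ι _ S P k C c _ hP hsize
  obtain ⟨A, hAS, hAk⟩ := exists_subset_card_eq (s := S) (n := k) (by omega)
  exact ⟨fun _ => A, fun _ => hAS, fun _ => hAk,
    fun _ i => (card_le_card (inter_subset_inter_right hAS)).trans (hP.card_inter_le i),
    Subsingleton.pairwise, fun _ _ => rfl⟩

theorem mul {p u bp bu : ℕ} (hp : MonoBound α p bp) (hu : MonoBound α u bu) (hu0 : 0 < u) :
    MonoBound α (p * u) (bp * bu) := by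
  intro ι _ S P k C c hk hP hsize
  obtain ⟨Q, hQ, hQP⟩ := hP.exists_refinement
  set k' := u * (k - 1) + (u - 1) * C + 1
  have inner : ∀ S' ⊆ S, S'.card = k' → (∀ q, (S' ∩ Q q).card ≤ 1) →
      ∃ B : Fin u → Finset α, IsMonoFamily P S' k c B := fun S' hS' hcard htr =>
    hu ι S' P k C c hk ⟨hP.disjoint, fun x hx => hP.cover x (hS' hx),
      card_inter_le_of_refines hP.disjoint hQP hQ.cover hS' htr⟩ (by omega)
  choose! B hB using inner
  obtain ⟨T, hT⟩ := hp (ι × Fin bu) S Q k' C (fun S' => c (B S' ⟨0, hu0⟩)) (by omega) hQ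
    (by rw [Nat.add_sub_cancel, mul_sub_one_add_sub_one hu0]; exact hsize)
  have hBT : ∀ j, IsMonoFamily P (T j) k c (B (T j)) := fun j =>
    hB _ (hT.subset j) (hT.card j) (hT.transversal j)
  exact ⟨_, (hT.prod hBT fun j i => (hBT j).mono i _).comp finProdFinEquiv.symm.injective⟩

end MonoBound

theorem monoBound_of_le_chiP {s b : ℕ} (hs : 2 ≤ s)
    (h : ∀ (k n l : ℕ) (P : Fin l → Finset (Fin n)), 1 ≤ k → s * k ≤ n → IsPartition P →
      (∀ i, (P i).card ≤ b) → cld (n - s * (k - 1)) (s - 1) ≤ chiP s n k P) :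
    MonoBound α s b := by
  intro ι _ S P k C c hk hP hsize
  let e : Fin S.card ↪ α := S.equivFin.symm.toEmbedding.trans (Embedding.subtype _)
  have he : ∀ t, e t ∈ S := fun t => (S.equivFin.symm t).2
  have hS : univ.map e = S := by
    rw [← map_map, map_univ_equiv, univ_eq_attach, attach_map_val]
  let σ := Fintype.equivFin ι
  let P' : Fin (Fintype.card ι) → Finset (Fin S.card) := fun i =>
    univ.filter fun t => e t ∈ P (σ.symm i)
  have hP' : IsPartition P' := by
    refine ⟨fun i j hij => disjoint_filter.2 fun t _ hi hj =>
      disjoint_left.1 (hP.disjoint (σ.symm.injective.ne hij)) hi hj, fun t => ?_⟩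
    obtain ⟨i, hi⟩ := hP.cover (e t) (he t)
    exact ⟨σ i, by simpa [P'] using hi⟩
  have hP'card : ∀ i, (P' i).card ≤ b := fun i =>
    calc (P' i).card = ((P' i).map e).card := (card_map e).symm
      _ ≤ (S ∩ P (σ.symm i)).card := card_le_card fun x hx => by
          obtain ⟨t, ht, rfl⟩ := mem_map.1 hx
          exact mem_inter.2 ⟨he t, (mem_filter.1 ht).2⟩
      _ ≤ b := hP.card_inter_le _
  have hC : 1 ≤ C := Fin.pos (c ∅)
  have hsk : s * k ≤ S.card := by
    have : s - 1 ≤ (s - 1) * C := Nat.le_mul_of_pos_right _ hC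
    have : s * (k - 1) + s = s * k := by rw [← Nat.mul_add_one, Nat.sub_add_cancel hk]
    omega
  have hlt : C < chiP s S.card k P' :=
    ((lt_cld_iff (by omega)).2 (by omega)).trans_le (h k S.card _ P' hk hsk hP' hP'card)
  have hnot : ¬ ProperP s S.card k P' fun τ => c (τ.map e) := fun hc =>
    hlt.not_ge (Nat.sInf_le ⟨_, hc⟩)
  obtain ⟨A', hA'⟩ := not_forall_not.1 (mt (properP_iff P' _).2 hnot)
  exact ⟨_, hS ▸ hA'.map e fun i => ⟨σ i, fun t ht => by simpa [P'] using ht⟩⟩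

theorem monoBound_of_dvd {r : ℕ} (H : ∀ p, p.Prime → p ∣ r → MonoBound α p (bfun p)) {s : ℕ}
    (hs : s ∣ r) : MonoBound α s (bfun s) := by
  induction s using Nat.recOnMul with
  | zero => exact MonoBound.zero _
  | one => rw [bfun_one]; exact MonoBound.one
  | prime p hp => exact H p hp hs
  | mul a b iha ihb =>
    rcases eq_or_ne (a * b) 0 with hab | hab
    · exact hab ▸ MonoBound.zero _
    · rw [bfun_mul (left_ne_zero_of_mul hab) (right_ne_zero_of_mul hab)]
      exact (iha (dvd_of_mul_right_dvd hs)).mul (ihb (dvd_of_mul_left_dvd hs))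
        (Nat.pos_of_ne_zero (right_ne_zero_of_mul hab))

end LowerBound

/-- if the lower bound holds for every prime `p ∣ r` and partitions with parts
of size at most `p-1` (resp. `2` when `p = 2`), then Conjecture (parts) holds for `r` and
partitions with parts of size at most `b(r)`. -/
theorem stmt7 (r : ℕ) (hr : 2 ≤ r)
    (H : ∀ p : ℕ, p.Prime → p ∣ r →
      ∀ (k n l : ℕ) (P : Fin l → Finset (Fin n)), 1 ≤ k → p * k ≤ n →
        IsPartition P → (∀ i, (P i).card ≤ if p = 2 then 2 else p - 1) →
        cld (n - p * (k - 1)) (p - 1) ≤ chiP p n k P)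
    (k n l : ℕ) (P : Fin l → Finset (Fin n)) (hk : 1 ≤ k) (hn : r * k ≤ n)
    (hP : IsPartition P) (hPc : ∀ i, (P i).card ≤ bfun r) :
    chiP r n k P = cld (n - r * (k - 1)) (r - 1) := by
  obtain ⟨c₀, hc₀⟩ := exists_properP_cld hr hk hn P
  refine le_antisymm (Nat.sInf_le ⟨c₀, hc₀⟩) (not_lt.1 fun hlt => ?_)
  obtain ⟨c, hc⟩ : ∃ c : Finset (Fin n) → Fin (chiP r n k P), ProperP r n k P c :=
    Nat.sInf_mem (s := {m | ∃ c : Finset (Fin n) → Fin m, ProperP r n k P c}) ⟨_, c₀, hc₀⟩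
  have hbound : MonoBound (Fin n) r (bfun r) := monoBound_of_dvd (fun p hp hpr =>
    monoBound_of_le_chiP hp.two_le (bfun_prime hp ▸ H p hp hpr)) dvd_rfl
  have hsize : r * (k - 1) + (r - 1) * chiP r n k P < (univ : Finset (Fin n)).card := by
    have := (lt_cld_iff (by omega)).1 hlt
    rw [card_univ, Fintype.card_fin]
    omega
  have hPb : IsBoundedPartition univ P (bfun r) :=
    ⟨fun i j h => hP.1 i j h, fun x _ => hP.2 x, fun i => (univ_inter (P i)).symm ▸ hPc i⟩
  obtain ⟨A, hA⟩ := hbound (Fin l) univ P k _ c hk hPb hsize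
  exact (properP_iff P c).1 hc A hA
end

section
/- Let P = {P_1,...,P_n} be the partition of [N] into consecutive blocks with |P_i| = s_i, N = Σ s_i, and suppose Σ_{i=j}^{j+t-1} s_i ≤ u for all j ∈ [n-t+1]. If A ⊆ [N] is a u-wide transversal k-subset (not contained in any interval of length u, meeting each P_i in at most one element), then its projection f(A) ⊆ [n] (where f maps elements of P_i to i) is a t-wide k-subset of [n]. -/
open Finset

/-
Inside a block the projection `f` is constant, so transversality makes it injective on `A`.
If `f(A)` lay in an interval `[a, a + t)` of `[n]`, shift it to a window `[j, j + t)` inside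
`[n]` with `j ≤ a`; the blocks `P_j, …, P_{j+t-1}` form an interval of `[N]` of length
`s_j + ⋯ + s_{j+t-1} ≤ u` containing `A`, contradicting `u`-wideness.
-/

section Blocks

variable {n : ℕ} (s : Fin n → ℕ)

lemma blockSum_add (j a b : ℕ) :
    blockSum s j (a + b) = blockSum s j a + blockSum s (j + a) b := by
  unfold blockSum
  rw [← add_assoc, Finset.sum_Ico_consecutive _ (Nat.le_add_right j a) (Nat.le_add_right _ b)]

lemma blockSum_mono (j : ℕ) : Monotone (blockSum s j) := fun a b hab => by
  obtain ⟨c, rfl⟩ := Nat.exists_eq_add_of_le hab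
  rw [blockSum_add]
  exact Nat.le_add_right _ _

lemma val_mem_window_of_mem_blocks {N : ℕ} {x : Fin N} {i : Fin n} (hx : x ∈ blocks s N i)
    {j t : ℕ} (hji : j ≤ i) (hit : i < j + t) :
    blockSum s 0 j ≤ x ∧ x < blockSum s 0 j + blockSum s j t := by
  simp only [blocks, Finset.mem_filter, Finset.mem_univ, true_and] at hx
  have hlo := blockSum_mono s 0 hji
  have hhi := blockSum_mono s 0 (show i.val + 1 ≤ j + t by omega)
  rw [blockSum_add s 0 j t, zero_add] at hhi
  omega

end Blocks

lemma Transversal.injOn {N n : ℕ} {P : Fin n → Finset (Fin N)} {A : Finset (Fin N)}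
    (hA : Transversal P A) {f : Fin N → Fin n} (hf : ∀ x, x ∈ P (f x)) : Set.InjOn f A := by
  intro x hx y hy hxy
  by_contra hne
  have hx' : x ∈ A ∩ P (f x) := mem_inter.mpr ⟨hx, hf x⟩
  have hy' : y ∈ A ∩ P (f x) := mem_inter.mpr ⟨hy, hxy ▸ hf y⟩
  exact absurd (hA (f x)) (not_le.mpr (one_lt_card.mpr ⟨x, hx', y, hy', hne⟩))

lemma Wide.image_of_mem_blocks {n N t u : ℕ} (ht : t ≤ n) {s : Fin n → ℕ}
    (hsum : ∀ j : ℕ, j + t ≤ n → blockSum s j t ≤ u)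
    {f : Fin N → Fin n} (hf : ∀ x, x ∈ blocks s N (f x)) {A : Finset (Fin N)}
    (hA : Wide N u A) : Wide n t (A.image f) := by
  intro a ha
  set j := min a (n - t)
  have hu := hsum j (by omega)
  refine hA (blockSum s 0 j) fun x hx => ?_
  have hfx := ha (f x) (mem_image_of_mem f hx)
  have hwin := val_mem_window_of_mem_blocks s (hf x) (j := j) (t := t) (by omega)
    (by have := (f x).isLt; omega)
  omega

theorem stmt12_general (n N k t u : ℕ) (ht : t ≤ n)
    (s : Fin n → ℕ)
    (hsum : ∀ j : ℕ, j + t ≤ n → blockSum s j t ≤ u)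
    (f : Fin N → Fin n) (hf : ∀ x, x ∈ blocks s N (f x))
    (A : Finset (Fin N)) (hA : A.card = k) (hAw : Wide N u A)
    (hAt : Transversal (blocks s N) A) :
    (A.image f).card = k ∧ Wide n t (A.image f) :=
  ⟨by rw [card_image_of_injOn (hAt.injOn hf), hA], hAw.image_of_mem_blocks ht hsum hf⟩

/-- a `u`-wide transversal `k`-subset of `[N]` projects along the
consecutive-blocks partition to a `t`-wide `k`-subset of `[n]`. -/
theorem stmt12 (n N k t u : ℕ) (hk : 1 ≤ k) (ht : t ≤ n)
    (s : Fin n → ℕ) (hN : N = ∑ i, s i)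
    (hsum : ∀ j : ℕ, j + t ≤ n → blockSum s j t ≤ u)
    (f : Fin N → Fin n) (hf : ∀ x, x ∈ blocks s N (f x))
    (A : Finset (Fin N)) (hA : A.card = k) (hAw : Wide N u A)
    (hAt : Transversal (blocks s N) A) :
    (A.image f).card = k ∧ Wide n t (A.image f) :=
  stmt12_general n N k t u ht s hsum f hf A hA hAw hAt
end
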